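/- Let H be a finite-dimensional factorizable ribbon Hopf algebra, and consider H^* \otimes H^* with the action of the 'D-twist' operator: v_{D}^{-1} \triangleright (\varphi \otimes \psi) = \varphi(S^{-1}(a_j) a_k ? b_k v''^{-1} b_j) \otimes \psi(S^{-1}(a_l) S^{-1}(v'^{-1}) a_m ? b_m b_l), and the Lyubashenko operator Z(\tau_d): K \otimes K \to K \otimes K, (\varphi \otimes \psi) \mapsto \varphi(? v'^{-1}) \otimes \psi(S(v''^{-1}) ?). Then the map (F \circ S)^{\otimes 2} \circ \sigma intertwines them, i.e. (F\circ S)^{\otimes 2} \circ \sigma \circ Z(\tau_d) = v_D^{-1} \circ (F \circ S)^{\otimes 2} \circ \sigma, where F(\varphi) = \varphi(a_i ? b_i), S is the antipode acting by precomposition (S(\varphi) = \varphi \circ S), and \sigma is the flip of the two tensor factors. -/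

import Mathlib

/-!
Write `G x = ∑ᵢ S(aᵢ x bᵢ) = ∑ᵢ S(bᵢ) S(x) S(aᵢ)`; on `H^*` the map `F ∘ S` is precomposition
with `G`. After the flip, the two tensor legs of the intertwining relation become the identities
`S(c) G(x) = ∑ G(S⁻¹(aⱼ) a_k x b_k c bⱼ)` and `G(x) c = ∑ G(S⁻¹(a_l) S⁻¹(c) a_m x b_m b_l)`
in `H`, for arbitrary `c`. Expanding `G` with `S ∘ S⁻¹ = id`, both reduce to
`∑ S(bᵢ) S(b_l) z a_l S(aᵢ) = z`, i.e. `∑ S(bᵢ) S(b_l) ⊗ a_l S(aᵢ) = 1 ⊗ 1`. This is the image of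
`R · (S ⊗ id)(R) = 1` under the algebra map `A ⊗ A → Aᵐᵒᵖ ⊗ A`, `x ⊗ y ↦ S(y) ⊗ x`, and
`R · (S ⊗ id)(R) = 1` follows from the hexagon relation `(Δ ⊗ id) R = R₁₃ R₂₃` and the
invertibility of `R`.
-/

open scoped TensorProduct
open TensorProduct

variable {k A : Type} [Field k] [Ring A] [HopfAlgebra k A]

/-- The linear map `x ↦ c x d` on `H`. -/
noncomputable def conjMap (c d : A) : A →ₗ[k] A :=
  (LinearMap.mulRight k d) ∘ₗ (LinearMap.mulLeft k c)

namespace RMatrix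

open Coalgebra HopfAlgebra

variable {k A ι : Type*} [CommSemiring k] [Semiring A] [HopfAlgebra k A] [Fintype ι]
  {a b : ι → A}

lemma sum_antipode_mul_tmul_mul_eq_one {κ : Type*} [Fintype κ] {c d : κ → A}
    (h : (∑ l, a l ⊗ₜ[k] b l) * (∑ i, c i ⊗ₜ[k] d i) = 1) :
    ∑ i, ∑ l, (antipode k (d i) * antipode k (b l)) ⊗ₜ[k] (a l * c i) = (1 : A ⊗[k] A) := by
  let Φ : A ⊗[k] A →ₐ[k] Aᵐᵒᵖ ⊗[k] A :=
    (Algebra.TensorProduct.map (antipodeAlgHomOp k A) (AlgHom.id k A)).comp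
      (Algebra.TensorProduct.comm k A A).toAlgHom
  have hΦ := congrArg Φ h
  rw [map_mul, map_one, map_sum, map_sum, Finset.sum_mul_sum] at hΦ
  have := congrArg
    (TensorProduct.congr (MulOpposite.opLinearEquiv k).symm (LinearEquiv.refl k A)) hΦ
  rw [Finset.sum_comm]
  simpa [Φ, Algebra.TensorProduct.tmul_mul_tmul, Algebra.TensorProduct.one_def, map_sum] using this

variable (hΔR : (∑ i, comul (R := k) (a i) ⊗ₜ[k] b i : (A ⊗[k] A) ⊗[k] A)
    = (∑ i, (a i ⊗ₜ[k] (1:A)) ⊗ₜ[k] b i) * (∑ i, ((1:A) ⊗ₜ[k] a i) ⊗ₜ[k] b i))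
include hΔR

lemma sum_map_comul_tmul (g : A ⊗[k] A →ₗ[k] A) :
    ∑ i, g (comul (a i)) ⊗ₜ[k] b i = ∑ i, ∑ l, g (a i ⊗ₜ[k] a l) ⊗ₜ[k] (b i * b l) := by
  have := congrArg (TensorProduct.map g LinearMap.id) hΔR
  simpa [Finset.sum_mul_sum, Algebra.TensorProduct.tmul_mul_tmul, map_sum] using this

variable (hR : IsUnit (∑ i, a i ⊗ₜ[k] b i))
include hR

lemma one_tmul_sum_counit_smul_eq_one :
    (1 : A) ⊗ₜ[k] (∑ i, counit (R := k) (a i) • b i) = 1 := by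
  have h := sum_map_comul_tmul hΔR ((TensorProduct.lid k A).toLinearMap ∘ₗ counit.rTensor A)
  simp only [LinearMap.comp_apply, rTensor_counit_comul, LinearMap.rTensor_tmul,
    LinearEquiv.coe_coe, TensorProduct.lid_tmul] at h
  rw [← hR.isRegular.right.mul_right_eq_self_iff, TensorProduct.tmul_sum, Finset.sum_mul_sum]
  simpa [Algebra.TensorProduct.tmul_mul_tmul, smul_mul_assoc, TensorProduct.smul_tmul] using h.symm

lemma mul_sum_antipode_tmul_eq_one :
    (∑ i, a i ⊗ₜ[k] b i) * (∑ i, antipode k (a i) ⊗ₜ[k] b i) = 1 := by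
  have h := sum_map_comul_tmul hΔR (LinearMap.mul' k A ∘ₗ (antipode k).lTensor A)
  simp only [LinearMap.comp_apply, mul_antipode_lTensor_comul_apply, LinearMap.lTensor_tmul,
    LinearMap.mul'_apply, Algebra.algebraMap_eq_smul_one] at h
  rw [← one_tmul_sum_counit_smul_eq_one hΔR hR, Finset.sum_mul_sum]
  simpa [Algebra.TensorProduct.tmul_mul_tmul, TensorProduct.tmul_sum, TensorProduct.smul_tmul]
    using h.symm

lemma sum_antipode_mul_mul_eq_self (z : A) :
    ∑ i, ∑ l, antipode k (b i) * antipode k (b l) * z * (a l * antipode k (a i)) = z := by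
  have h := congrArg (LinearMap.mul' k A ∘ₗ (LinearMap.mulRight k z).rTensor A)
    (sum_antipode_mul_tmul_mul_eq_one (mul_sum_antipode_tmul_eq_one hΔR hR))
  simpa [Algebra.TensorProduct.one_def, map_sum] using h

end RMatrix

section AntipodeConj
open HopfAlgebra
variable {ι : Type*} [Fintype ι] (a b : ι → A)

noncomputable def antipodeConj : A →ₗ[k] A := antipode k ∘ₗ ∑ i, conjMap (a i) (b i)

variable {a b}

lemma antipodeConj_apply (x : A) :
    antipodeConj (k := k) a b x = ∑ i, antipode k (b i) * antipode k x * antipode k (a i) := by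
  simp [antipodeConj, conjMap, antipode_mul_antidistrib, mul_assoc]

lemma sum_dualMap_conjMap_comp_dualMap_antipode :
    (∑ i, (conjMap (k := k) (a i) (b i)).dualMap) ∘ₗ (antipode k (A := A)).dualMap
      = (antipodeConj a b).dualMap := by
  ext φ x
  simp [antipodeConj, LinearMap.dualMap_apply, map_sum]

variable (hΔR : (∑ i, Coalgebra.comul (R := k) (a i) ⊗ₜ[k] b i : (A ⊗[k] A) ⊗[k] A)
    = (∑ i, (a i ⊗ₜ[k] (1:A)) ⊗ₜ[k] b i) * (∑ i, ((1:A) ⊗ₜ[k] a i) ⊗ₜ[k] b i))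
  (hR : IsUnit (∑ i, a i ⊗ₜ[k] b i)) {Sinv : A → A} (hS : ∀ x, antipode k (Sinv x) = x)
include hΔR hR hS

lemma mulLeft_antipode_comp_antipodeConj (c : A) :
    LinearMap.mulLeft k (antipode k c) ∘ₗ antipodeConj a b
      = ∑ j, ∑ m, antipodeConj a b ∘ₗ conjMap (Sinv (a j) * a m) (b m * (c * b j)) := by
  ext x
  simp only [LinearMap.comp_apply, LinearMap.mulLeft_apply, LinearMap.coe_sum, Finset.sum_apply,
    antipodeConj_apply, conjMap, LinearMap.mulRight_apply, antipode_mul_antidistrib, hS]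
  conv_lhs => rw [← RMatrix.sum_antipode_mul_mul_eq_self hΔR hR (antipode k c * _)]
  simp only [Finset.mul_sum, Finset.sum_mul]
  rw [Finset.sum_comm]
  refine Finset.sum_congr rfl fun l _ => Finset.sum_comm.trans ?_
  simp only [mul_assoc]

lemma mulRight_comp_antipodeConj (c : A) :
    LinearMap.mulRight k c ∘ₗ antipodeConj a b
      = ∑ l, ∑ m, antipodeConj a b ∘ₗ conjMap (Sinv (a l) * (Sinv c * a m)) (b m * b l) := by
  ext x
  simp only [LinearMap.comp_apply, LinearMap.mulRight_apply, LinearMap.coe_sum, Finset.sum_apply,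
    antipodeConj_apply, conjMap, LinearMap.mulLeft_apply, antipode_mul_antidistrib, hS]
  conv_lhs => rw [← RMatrix.sum_antipode_mul_mul_eq_self hΔR hR (_ * c)]
  simp only [Finset.mul_sum, Finset.sum_mul]
  rw [Finset.sum_comm]
  refine Finset.sum_congr rfl fun l _ => Finset.sum_comm.trans ?_
  simp only [mul_assoc]

end AntipodeConj

theorem FS_intertwines_D_twist_general
    (Sinv : A →ₗ[k] A)
    (hS2 : ∀ x : A, HopfAlgebra.antipode (R := k) (Sinv x) = x)
    -- the R-matrix
    (ι : Type) [Fintype ι] (a b : ι → A)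
    (hRunit : IsUnit (∑ i, a i ⊗ₜ[k] b i))
    (hex1 : (∑ i, (Coalgebra.comul (R := k) (a i)) ⊗ₜ[k] b i : (A ⊗[k] A) ⊗[k] A)
        = (∑ i, (a i ⊗ₜ[k] (1:A)) ⊗ₜ[k] b i) * (∑ i, ((1:A) ⊗ₜ[k] a i) ⊗ₜ[k] b i))
    (κ : Type) (s : Finset κ) (v1 v2 : κ → A) :
    -- the intertwining relation `(F∘S)^{⊗2} ∘ σ ∘ Z(τ_d) = v_D⁻¹ ∘ (F∘S)^{⊗2} ∘ σ`
    (TensorProduct.map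
        ((∑ i, (conjMap (k := k) (a i) (b i)).dualMap)
          ∘ₗ (HopfAlgebra.antipode (R := k) (A := A)).dualMap)
        ((∑ i, (conjMap (k := k) (a i) (b i)).dualMap)
          ∘ₗ (HopfAlgebra.antipode (R := k) (A := A)).dualMap))
      ∘ₗ (TensorProduct.comm k (Module.Dual k A) (Module.Dual k A)).toLinearMap
      ∘ₗ (∑ j ∈ s, TensorProduct.map
            ((LinearMap.mulRight k (v1 j)).dualMap)
            ((LinearMap.mulLeft k (HopfAlgebra.antipode (R := k) (v2 j))).dualMap))
    = (∑ j ∈ s, ∑ j2 : ι, ∑ kk : ι, ∑ l : ι, ∑ m : ι,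
        TensorProduct.map
          ((conjMap (k := k) (Sinv (a j2) * a kk) (b kk * (v2 j * b j2))).dualMap)
          ((conjMap (k := k) (Sinv (a l) * (Sinv (v1 j) * a m)) (b m * b l)).dualMap))
      ∘ₗ (TensorProduct.map
        ((∑ i, (conjMap (k := k) (a i) (b i)).dualMap)
          ∘ₗ (HopfAlgebra.antipode (R := k) (A := A)).dualMap)
        ((∑ i, (conjMap (k := k) (a i) (b i)).dualMap)
          ∘ₗ (HopfAlgebra.antipode (R := k) (A := A)).dualMap))
      ∘ₗ (TensorProduct.comm k (Module.Dual k A) (Module.Dual k A)).toLinearMap := by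
  rw [sum_dualMap_conjMap_comp_dualMap_antipode]
  refine TensorProduct.ext' fun φ ψ => ?_
  simp only [LinearMap.comp_apply, LinearMap.coe_sum, Finset.sum_apply, map_sum,
    TensorProduct.map_tmul, LinearEquiv.coe_coe, TensorProduct.comm_tmul,
    LinearMap.dualMap_apply']
  refine Finset.sum_congr rfl fun j _ => ?_
  simp only [← TensorProduct.tmul_sum, ← TensorProduct.sum_tmul]
  congr 1 <;> ext x
  · simpa [map_sum] using
      congr(ψ ($(mulLeft_antipode_comp_antipodeConj hex1 hRunit hS2 (v2 j)) x))
  · simpa [map_sum] using congr(φ ($(mulRight_comp_antipodeConj hex1 hRunit hS2 (v1 j)) x))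

/-- The map `(F ∘ S)^{⊗2} ∘ σ` intertwines the Lyubashenko operator
`Z(τ_d) : φ ⊗ ψ ↦ φ(? v'⁻¹) ⊗ ψ(S(v''⁻¹) ?)` with the `D`-twist operator
`v_D⁻¹ : φ ⊗ ψ ↦ φ(S⁻¹(aⱼ)a_k ? b_k v''⁻¹ bⱼ) ⊗ ψ(S⁻¹(a_l)S⁻¹(v'⁻¹)a_m ? b_m b_l)`. -/
theorem FS_intertwines_D_twist
    [FiniteDimensional k A]
    (Sinv : A →ₗ[k] A)
    (hS1 : ∀ x : A, Sinv (HopfAlgebra.antipode (R := k) x) = x)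
    (hS2 : ∀ x : A, HopfAlgebra.antipode (R := k) (Sinv x) = x)
    -- the R-matrix
    (ι : Type) [Fintype ι] (a b : ι → A)
    (hRunit : IsUnit (∑ i, a i ⊗ₜ[k] b i))
    (hIntertwine : ∀ x : A, (∑ i, a i ⊗ₜ[k] b i) * Coalgebra.comul x
        = (TensorProduct.comm k A A) (Coalgebra.comul x) * (∑ i, a i ⊗ₜ[k] b i))
    (hex1 : (∑ i, (Coalgebra.comul (R := k) (a i)) ⊗ₜ[k] b i : (A ⊗[k] A) ⊗[k] A)
        = (∑ i, (a i ⊗ₜ[k] (1:A)) ⊗ₜ[k] b i) * (∑ i, ((1:A) ⊗ₜ[k] a i) ⊗ₜ[k] b i))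
    (hex2 : (∑ i, a i ⊗ₜ[k] (Coalgebra.comul (R := k) (b i)) : A ⊗[k] (A ⊗[k] A))
        = (∑ i, a i ⊗ₜ[k] ((1:A) ⊗ₜ[k] b i)) * (∑ i, a i ⊗ₜ[k] (b i ⊗ₜ[k] (1:A))))
    -- the ribbon element
    (v vinv : A) (hv : v * vinv = 1) (hv' : vinv * v = 1)
    (hvcentral : ∀ x : A, v * x = x * v)
    (hSv : HopfAlgebra.antipode (R := k) v = v)
    (hεv : Coalgebra.counit (R := k) v = 1)
    -- a Sweedler decomposition `Δ(v⁻¹) = ∑ⱼ v1 j ⊗ v2 j`, with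
    -- `Δ(v⁻¹) = R'R (v⁻¹ ⊗ v⁻¹)`
    (κ : Type) (s : Finset κ) (v1 v2 : κ → A)
    (hΔvinv : Coalgebra.comul (R := k) vinv = ∑ j ∈ s, v1 j ⊗ₜ[k] v2 j)
    (hΔvinv' : (∑ j ∈ s, v1 j ⊗ₜ[k] v2 j)
        = (∑ i, b i ⊗ₜ[k] a i) * (∑ i, a i ⊗ₜ[k] b i) * (vinv ⊗ₜ[k] vinv)) :
    -- the intertwining relation `(F∘S)^{⊗2} ∘ σ ∘ Z(τ_d) = v_D⁻¹ ∘ (F∘S)^{⊗2} ∘ σ`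
    (TensorProduct.map
        ((∑ i, (conjMap (k := k) (a i) (b i)).dualMap)
          ∘ₗ (HopfAlgebra.antipode (R := k) (A := A)).dualMap)
        ((∑ i, (conjMap (k := k) (a i) (b i)).dualMap)
          ∘ₗ (HopfAlgebra.antipode (R := k) (A := A)).dualMap))
      ∘ₗ (TensorProduct.comm k (Module.Dual k A) (Module.Dual k A)).toLinearMap
      ∘ₗ (∑ j ∈ s, TensorProduct.map
            ((LinearMap.mulRight k (v1 j)).dualMap)
            ((LinearMap.mulLeft k (HopfAlgebra.antipode (R := k) (v2 j))).dualMap))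
    = (∑ j ∈ s, ∑ j2 : ι, ∑ kk : ι, ∑ l : ι, ∑ m : ι,
        TensorProduct.map
          ((conjMap (k := k) (Sinv (a j2) * a kk) (b kk * (v2 j * b j2))).dualMap)
          ((conjMap (k := k) (Sinv (a l) * (Sinv (v1 j) * a m)) (b m * b l)).dualMap))
      ∘ₗ (TensorProduct.map
        ((∑ i, (conjMap (k := k) (a i) (b i)).dualMap)
          ∘ₗ (HopfAlgebra.antipode (R := k) (A := A)).dualMap)
        ((∑ i, (conjMap (k := k) (a i) (b i)).dualMap)
          ∘ₗ (HopfAlgebra.antipode (R := k) (A := A)).dualMap))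
      ∘ₗ (TensorProduct.comm k (Module.Dual k A) (Module.Dual k A)).toLinearMap :=
  FS_intertwines_D_twist_general Sinv hS2 ι a b hRunit hex1 κ s v1 v2
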